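/- arXiv:math/0512227 — 3 statements merged into one kernel-verified Lean document; each statement's English description precedes it below -/
import Mathlib

section
/- (T_•, ∗̂) is a free associative ℤ-algebra, freely generated by the set of reduced set compositions; equivalently, the symmetrized products P^{(1)} ∗̂ ⋯ ∗̂ P^{(m)} taken over all finite sequences (P^{(1)},…,P^{(m)}) of reduced set compositions form a ℤ-basis of T_•. -/
/-!
Count, for a set composition, the pairs `x < y` whose blocks occur in this order. Among the
shuffles in `P ∗̂ Q` (with `P ∈ Comp_p`), the one with `A = [p]` is the restricted product
`P ∗̄ Q = (P, Q + p)`, which has the most such pairs (all `p q` cross pairs); every other `A`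
inverts some cross pair. Hence `P⁽¹⁾ ∗̂ ⋯ ∗̂ P⁽ᵐ⁾` is `P⁽¹⁾ ∗̄ ⋯ ∗̄ P⁽ᵐ⁾` plus set compositions
of the same degree with fewer such pairs. Cutting a set composition at the shortest prefix whose
union is an initial interval shows that every set composition is a `∗̄`-product of reduced ones,
in exactly one way. The family is therefore unitriangular with respect to a bijection onto the
basis `Comp_•`, hence itself a basis.
-/

set_option linter.unreachableTactic false
set_option linter.unusedTactic false
set_option maxHeartbeats 1000000


open Finset

/-- Candidate set compositions: lists of finite sets of positive naturals. -/
abbrev SC : Type := List (Finset ℕ)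

/-- The underlying (ground) set of a list of blocks. -/
def ground (L : SC) : Finset ℕ := L.foldr (· ∪ ·) ∅

/-- `L` is a set composition of `[n] = {1,…,n}`. -/
def IsSetComp (n : ℕ) (L : SC) : Prop :=
  (∀ B ∈ L, B.Nonempty) ∧ L.Pairwise Disjoint ∧ ground L = Finset.Icc 1 n

/-- The degree of a set composition (largest element of its ground set). -/
def maxG (L : SC) : ℕ := (ground L).sup id

/-- The 1-based rank of `x` inside the finite set `A` (the position of `x` in the
increasing enumeration of `A`, when `x ∈ A`); this is the order preserving
relabelling `A → [|A|]`. -/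
def rankIn (A : Finset ℕ) (x : ℕ) : ℕ := (A.filter (· ≤ x)).card

/-- `P|_A` : intersect the blocks with `A`, delete the empty intersections, and
relabel along the order preserving bijection `A → [|A|]`. -/
def restrictSC (A : Finset ℕ) (L : SC) : SC :=
  (L.map fun B => (B ∩ A).image (rankIn A)).filter fun B => decide B.Nonempty

/-- Shift all entries of all blocks by `p`. -/
def shiftSC (p : ℕ) (L : SC) : SC := L.map (Finset.image (· + p))

/-- The restricted product `∗̄` on set compositions:
`P ∗̄ Q = (P₁,…,P_k, p+Q₁,…,p+Q_l)` for `P ∈ Comp_p`. -/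
def barMul (P Q : SC) : SC := P ++ shiftSC (maxG P) Q

/-- The order-preserving relabelling map `S → T` (`is_{S,T}`), for finite sets
of equal cardinality. -/
def relabelFun (S T : Finset ℕ) (x : ℕ) : ℕ := (T.sort (· ≤ ·)).getD (rankIn S x - 1) 0

/-- Relabel a set composition of `S` along the order-preserving bijection `S → T`. -/
def relabelSC (S T : Finset ℕ) (L : SC) : SC := L.map (Finset.image (relabelFun S T))

variable (R : Type) [CommRing R]

/-- The free module with basis indexed by lists of blocks; the twisted descent
algebra `T_•` is its submodule spanned by the set compositions. -/
abbrev FM := SC →₀ R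

/-- `T_•` as a submodule: the span of the set compositions. -/
noncomputable def Tspan : Submodule R (FM R) :=
  Submodule.span R {f : FM R | ∃ n P, IsSetComp n P ∧ f = Finsupp.single P 1}

/-- The restricted product `∗̄` as a bilinear map. -/
noncomputable def barL : FM R →ₗ[R] FM R →ₗ[R] FM R :=
  Finsupp.lift _ R SC fun P => Finsupp.lift _ R SC fun Q => Finsupp.single (barMul P Q) 1

/-- The symmetrized product `∗̂` on basis elements:
`P ∗̂ Q = Σ is_{[p],A}(P) ∗ is_{[q],B}(Q)` over all `A ⊔ B = [p+q]`, `|A| = p`. -/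
noncomputable def hatB (P Q : SC) : FM R :=
  ∑ A ∈ (Finset.Icc 1 (maxG P + maxG Q)).powerset.filter (fun A => A.card = maxG P),
    Finsupp.single
      (relabelSC (Finset.Icc 1 (maxG P)) A P ++
        relabelSC (Finset.Icc 1 (maxG Q)) ((Finset.Icc 1 (maxG P + maxG Q)) \ A) Q) 1

/-- The symmetrized product `∗̂` as a bilinear map. -/
noncomputable def hatL : FM R →ₗ[R] FM R →ₗ[R] FM R :=
  Finsupp.lift _ R SC fun P => Finsupp.lift _ R SC fun Q => hatB R P Q

/-- `T_• ⊗ T_•`, realized as the free module on pairs of basis elements. -/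
abbrev FM2 := (SC × SC) →₀ R

/-- `T_• ⊗ T_• ⊗ T_•`, realized as the free module on triples of basis elements. -/
abbrev FM3 := (SC × SC × SC) →₀ R

/-- The restricted coproduct `δ̄ (P) = Σ_{p=0}^n P|_{[p]} ⊗ P|_{{p+1,…,n}}`. -/
noncomputable def dBarL : FM R →ₗ[R] FM2 R :=
  Finsupp.lift _ R SC fun P =>
    ∑ p ∈ Finset.range (maxG P + 1),
      Finsupp.single
        (restrictSC (Finset.Icc 1 p) P, restrictSC (Finset.Icc (p+1) (maxG P)) P) 1

/-- The cosymmetrized coproduct `δ̂ (P) = Σ_{A ⊔ B = [n]} P|_A ⊗ P|_B`. -/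
noncomputable def dHatL : FM R →ₗ[R] FM2 R :=
  Finsupp.lift _ R SC fun P =>
    ∑ A ∈ (Finset.Icc 1 (maxG P)).powerset,
      Finsupp.single (restrictSC A P, restrictSC ((Finset.Icc 1 (maxG P)) \ A) P) 1

/-- Apply a coproduct to the first tensor factor:  `d ⊗ id : T⊗T → T⊗T⊗T`. -/
noncomputable def applyFst (d : FM R →ₗ[R] FM2 R) : FM2 R →ₗ[R] FM3 R :=
  Finsupp.lift _ R (SC × SC) fun PQ =>
    Finsupp.mapDomain (fun RS : SC × SC => (RS.1, RS.2, PQ.2)) (d (Finsupp.single PQ.1 1))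

/-- Apply a coproduct to the second tensor factor:  `id ⊗ d : T⊗T → T⊗T⊗T`. -/
noncomputable def applySnd (d : FM R →ₗ[R] FM2 R) : FM2 R →ₗ[R] FM3 R :=
  Finsupp.lift _ R (SC × SC) fun PQ =>
    Finsupp.mapDomain (fun RS : SC × SC => (PQ.1, RS.1, RS.2)) (d (Finsupp.single PQ.2 1))

/-- `ε ⊗ id : T⊗T → T`, where `ε` is the projection onto `T_0 ≅ R`
(the coefficient of the empty set composition). -/
noncomputable def epsFst : FM2 R →ₗ[R] FM R :=
  Finsupp.lift _ R (SC × SC) fun PQ =>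
    if PQ.1 = ([] : SC) then Finsupp.single PQ.2 1 else 0

/-- `id ⊗ ε : T⊗T → T`. -/
noncomputable def epsSnd : FM2 R →ₗ[R] FM R :=
  Finsupp.lift _ R (SC × SC) fun PQ =>
    if PQ.2 = ([] : SC) then Finsupp.single PQ.1 1 else 0

/-- The twist map `x ⊗ y ↦ y ⊗ x` on `T_• ⊗ T_•`. -/
noncomputable def twistL : FM2 R →ₗ[R] FM2 R :=
  Finsupp.lift _ R (SC × SC) fun PQ => Finsupp.single (PQ.2, PQ.1) 1

/-- The counit: projection onto the degree-0 component `T_0 ≅ R`. -/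
noncomputable def counitL : FM R →ₗ[R] R :=
  Finsupp.lift _ R SC fun P => if P = ([] : SC) then 1 else 0

/-- A set composition `(P₁,…,P_k)` of `[n]` is reduced if it is non-trivial and
there is no pair `(a, m)` with `1 ≤ a < k` and `m < n` such that
`P₁ ∪ ⋯ ∪ P_a = [m]`. -/
def Reduced (n : ℕ) (P : SC) : Prop :=
  IsSetComp n P ∧ 0 < n ∧
    ∀ a m, 0 < a → a < P.length → m < n → ground (P.take a) ≠ Finset.Icc 1 m

/-- Finite sequences of reduced set compositions. -/
abbrev RedSeq := {F : List SC // ∀ Q ∈ F, ∃ m, Reduced m Q}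

/-- The symmetrized product `P⁽¹⁾ ∗̂ ⋯ ∗̂ P⁽ᵐ⁾` of a finite sequence of set
compositions (the empty product being the empty set composition). -/
noncomputable def hatProdList (F : List SC) : FM ℤ :=
  F.foldr (fun P acc => hatL ℤ (Finsupp.single P 1) acc) (Finsupp.single ([] : SC) 1)

open Finsupp

section Unitriangular

variable {ι α k : Type*} [Ring k] {v : ι → α →₀ k} {lead : ι → α} {μ : α → ℕ}

theorem linearIndependent_of_unitriangular (hlead : Function.Injective lead)
    (hv : ∀ i, v i - single (lead i) 1 ∈ supported k k {a | μ a < μ (lead i)}) :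
    LinearIndependent k v := by
  classical
  rw [linearIndependent_iff]
  intro l hl
  by_contra hl0
  obtain ⟨i₀, hi₀, hmax⟩ :=
    l.support.exists_max_image (μ ∘ lead) (support_nonempty_iff.mpr hl0)
  have hcoeff : ∀ i ∈ l.support, l i • v i (lead i₀) = if i = i₀ then l i₀ else 0 := by
    intro i hi
    have hlow : (v i - single (lead i) (1 : k)) (lead i₀) = 0 :=
      notMem_support_iff.mp fun h => (hmax i hi).not_gt (hv i h)
    rw [Finsupp.sub_apply, sub_eq_zero] at hlow
    rw [hlow, single_apply, hlead.eq_iff]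
    split_ifs with h <;> simp [h]
  have := congr($hl (lead i₀))
  simp only [linearCombination_apply, Finsupp.sum, finsetSum_apply, Finsupp.smul_apply,
    Finsupp.coe_zero, Pi.zero_apply] at this
  rw [Finset.sum_congr rfl hcoeff, Finset.sum_ite_eq', if_pos hi₀] at this
  exact mem_support_iff.mp hi₀ this

theorem span_range_eq_supported_of_unitriangular {S : Set α}
    (hv : ∀ i, v i - single (lead i) 1 ∈ supported k k (S ∩ {a | μ a < μ (lead i)}))
    (hlead : ∀ i, lead i ∈ S) (hS : S ⊆ Set.range lead) :
    Submodule.span k (Set.range v) = supported k k S := by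
  apply le_antisymm
  · rw [Submodule.span_le]
    rintro _ ⟨i, rfl⟩
    rw [← sub_add_cancel (v i) (single (lead i) 1)]
    exact add_mem (supported_mono Set.inter_subset_left (hv i))
      (single_mem_supported k 1 (hlead i))
  · have key : ∀ n, ∀ a ∈ S, μ a = n → single a 1 ∈ Submodule.span k (Set.range v) := by
      intro n
      induction n using Nat.strong_induction_on with
      | _ n ih =>
        rintro a ha rfl
        obtain ⟨i, rfl⟩ := hS ha
        have hlow : v i - single (lead i) 1 ∈ Submodule.span k (Set.range v) := by
          refine (supported_eq_span_single k _ ▸ Submodule.span_le.mpr ?_) (hv i)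
          rintro _ ⟨b, ⟨hb, hμb⟩, rfl⟩
          exact ih _ hμb b hb rfl
        simpa using sub_mem (Submodule.subset_span (Set.mem_range_self i)) hlow
    rw [supported_eq_span_single, Submodule.span_le]
    rintro _ ⟨a, ha, rfl⟩
    exact key _ a ha rfl

end Unitriangular

theorem mem_ground {L : SC} {x : ℕ} : x ∈ ground L ↔ ∃ B ∈ L, x ∈ B := by
  induction L with
  | nil => simp [ground]
  | cons B L ih => simpa [ground] using or_congr_right ih

theorem ground_cons (B : Finset ℕ) (L : SC) : ground (B :: L) = B ∪ ground L := rfl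

theorem ground_append (L₁ L₂ : SC) : ground (L₁ ++ L₂) = ground L₁ ∪ ground L₂ := by
  induction L₁ with
  | nil => simp [ground]
  | cons B L ih => simp [ground_cons, ih, Finset.union_assoc]

theorem ground_map_image (f : ℕ → ℕ) (L : SC) :
    ground (L.map (image f)) = (ground L).image f := by
  induction L with
  | nil => simp [ground]
  | cons B L ih => simp [ground_cons, ih, Finset.image_union]

theorem subset_ground {L : SC} {B : Finset ℕ} (h : B ∈ L) : B ⊆ ground L :=
  fun _ hx => mem_ground.mpr ⟨B, h, hx⟩

/-- Set compositions of an arbitrary finite set: `IsSetComp n` unfolds to `IsSetCompOn (Icc 1 n)`,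
which is how the lemmas below apply to hypotheses `IsSetComp n L`. -/
def IsSetCompOn (S : Finset ℕ) (L : SC) : Prop :=
  (∀ B ∈ L, B.Nonempty) ∧ L.Pairwise Disjoint ∧ ground L = S

namespace IsSetCompOn

variable {S T : Finset ℕ} {L L₁ L₂ : SC}

theorem subset (h : IsSetCompOn S L) {B : Finset ℕ} (hB : B ∈ L) : B ⊆ S :=
  h.2.2 ▸ subset_ground hB

theorem eq_nil_iff (h : IsSetCompOn S L) : L = [] ↔ S = ∅ := by
  refine ⟨fun hL => by simp [← h.2.2, hL, ground], fun hS => ?_⟩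
  cases L with
  | nil => rfl
  | cons B L =>
    obtain ⟨x, hx⟩ := h.1 B List.mem_cons_self
    simpa [hS] using h.subset List.mem_cons_self hx

theorem map_image {f : ℕ → ℕ} (h : IsSetCompOn S L) (hf : Set.InjOn f S) :
    IsSetCompOn (S.image f) (L.map (image f)) := by
  refine ⟨?_, ?_, by rw [ground_map_image, h.2.2]⟩
  · simp only [List.mem_map]
    rintro _ ⟨B, hB, rfl⟩
    exact (h.1 B hB).image f
  · refine List.pairwise_map.mpr (h.2.1.imp_of_mem fun hB hC hBC => ?_)
    rw [← Finset.disjoint_coe, Finset.coe_image, Finset.coe_image]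
    exact (Finset.disjoint_coe.mpr hBC).image hf (mod_cast h.subset hB) (mod_cast h.subset hC)

theorem append (h₁ : IsSetCompOn S L₁) (h₂ : IsSetCompOn T L₂) (hST : Disjoint S T) :
    IsSetCompOn (S ∪ T) (L₁ ++ L₂) := by
  refine ⟨?_, ?_, by rw [ground_append, h₁.2.2, h₂.2.2]⟩
  · simp only [List.mem_append]
    rintro B (hB | hB)
    exacts [h₁.1 B hB, h₂.1 B hB]
  · exact List.pairwise_append.mpr ⟨h₁.2.1, h₂.2.1, fun B hB C hC =>
      hST.mono (h₁.subset hB) (h₂.subset hC)⟩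

theorem of_append (h : IsSetCompOn S (L₁ ++ L₂)) :
    IsSetCompOn (ground L₁) L₁ ∧ IsSetCompOn (ground L₂) L₂ ∧
      Disjoint (ground L₁) (ground L₂) ∧ ground L₁ ∪ ground L₂ = S := by
  obtain ⟨hne, hpw, hg⟩ := h
  obtain ⟨hpw₁, hpw₂, hcross⟩ := List.pairwise_append.mp hpw
  refine ⟨⟨fun B hB => hne B (List.mem_append_left _ hB), hpw₁, rfl⟩,
    ⟨fun B hB => hne B (List.mem_append_right _ hB), hpw₂, rfl⟩, ?_,
    by rw [← ground_append, hg]⟩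
  rw [Finset.disjoint_left]
  intro x hx₁ hx₂
  obtain ⟨B, hB, hxB⟩ := mem_ground.mp hx₁
  obtain ⟨C, hC, hxC⟩ := mem_ground.mp hx₂
  exact Finset.disjoint_left.mp (hcross B hB C hC) hxB hxC

end IsSetCompOn

theorem IsSetComp.maxG_eq {n : ℕ} {L : SC} (h : IsSetComp n L) : maxG L = n := by
  rw [maxG, h.2.2]
  rcases Nat.eq_zero_or_pos n with rfl | hn
  · simp
  · exact le_antisymm (Finset.sup_le fun x hx => (mem_Icc.mp hx).2)
      (Finset.le_sup (f := id) (mem_Icc.mpr ⟨hn, le_rfl⟩))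

theorem sort_Icc (a n : ℕ) : (Icc (a + 1) (a + n)).sort = List.range' (a + 1) n := by
  have hI : (List.range' (a + 1) n).toFinset = Icc (a + 1) (a + n) := by
    ext x; simp only [List.mem_toFinset, List.mem_range'_1, mem_Icc]; omega
  rw [← hI, List.toFinset_sort _ List.nodup_range']
  exact (List.pairwise_lt_range' (s := a + 1) (n := n)).imp le_of_lt

theorem rankIn_Icc {p x : ℕ} (hx : x ∈ Icc 1 p) : rankIn (Icc 1 p) x = x := by
  have : (Icc 1 p).filter (· ≤ x) = Icc 1 x := by
    ext y; simp only [Finset.mem_filter, mem_Icc] at hx ⊢; omega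
  rw [rankIn, this, Nat.card_Icc, Nat.add_sub_cancel]

theorem relabelFun_Icc {p x : ℕ} (T : Finset ℕ) (hx : x ∈ Icc 1 p) :
    relabelFun (Icc 1 p) T x = T.sort.getD (x - 1) 0 := by
  rw [relabelFun, rankIn_Icc hx]

theorem strictMonoOn_relabelFun {p : ℕ} {T : Finset ℕ} (hT : T.card = p) :
    StrictMonoOn (relabelFun (Icc 1 p) T) (Icc 1 p) := by
  intro x hx y hy hxy
  rw [relabelFun_Icc T hx, relabelFun_Icc T hy]
  simp only [Finset.coe_Icc, Set.mem_Icc] at hx hy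
  have hlen : T.sort.length = p := by rw [Finset.length_sort, hT]
  rw [List.getD_eq_getElem _ _ (by omega), List.getD_eq_getElem _ _ (by omega)]
  exact T.sortedLT_sort.strictMono_get (show (⟨x - 1, _⟩ : Fin _) < ⟨y - 1, _⟩ from by
    simp only [Fin.mk_lt_mk]; omega)

theorem image_relabelFun {p : ℕ} {T : Finset ℕ} (hT : T.card = p) :
    (Icc 1 p).image (relabelFun (Icc 1 p) T) = T := by
  refine Finset.eq_of_subset_of_card_le (fun y hy => ?_) ?_
  · obtain ⟨x, hx, rfl⟩ := Finset.mem_image.mp hy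
    rw [relabelFun_Icc T hx, List.getD_eq_getElem _ _ (by
      rw [Finset.length_sort]; simp only [mem_Icc] at hx; omega)]
    exact (Finset.mem_sort _).mp (List.getElem_mem _)
  · rw [Finset.card_image_of_injOn (strictMonoOn_relabelFun hT).injOn, Nat.card_Icc, hT,
      Nat.add_sub_cancel]

theorem relabelFun_Icc_Icc {a q x : ℕ} (hx : x ∈ Icc 1 q) :
    relabelFun (Icc 1 q) (Icc (a + 1) (a + q)) x = x + a := by
  rw [relabelFun_Icc _ hx, sort_Icc]
  simp only [mem_Icc] at hx
  rw [List.getD_eq_getElem _ _ (by rw [List.length_range']; omega), List.getElem_range']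
  omega

theorem isSetCompOn_relabelSC {p : ℕ} {P : SC} {T : Finset ℕ} (hP : IsSetComp p P)
    (hT : T.card = p) : IsSetCompOn T (relabelSC (Icc 1 p) T P) := by
  have := IsSetCompOn.map_image hP (strictMonoOn_relabelFun hT).injOn
  rwa [image_relabelFun hT] at this

def crossNonInv (B C : Finset ℕ) : ℕ := ((B ×ˢ C).filter fun xy => xy.1 < xy.2).card

/-- The number of pairs `x < y` such that the block of `x` precedes the block of `y`. -/
def nonInv : SC → ℕ
  | [] => 0
  | B :: L => crossNonInv B (ground L) + nonInv L

theorem crossNonInv_union_left {B C D : Finset ℕ} (h : Disjoint B C) :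
    crossNonInv (B ∪ C) D = crossNonInv B D + crossNonInv C D := by
  rw [crossNonInv, Finset.union_product, Finset.filter_union, Finset.card_union_of_disjoint
    (Finset.disjoint_filter_filter (Finset.disjoint_product.mpr (Or.inl h)))]
  rfl

theorem crossNonInv_union_right {B C D : Finset ℕ} (h : Disjoint C D) :
    crossNonInv B (C ∪ D) = crossNonInv B C + crossNonInv B D := by
  rw [crossNonInv, Finset.product_union, Finset.filter_union, Finset.card_union_of_disjoint
    (Finset.disjoint_filter_filter (Finset.disjoint_product.mpr (Or.inr h)))]
  rfl

theorem crossNonInv_le (B C : Finset ℕ) : crossNonInv B C ≤ B.card * C.card :=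
  (Finset.card_filter_le _ _).trans (Finset.card_product B C).le

theorem crossNonInv_eq_mul {B C : Finset ℕ} (h : ∀ x ∈ B, ∀ y ∈ C, x < y) :
    crossNonInv B C = B.card * C.card := by
  rw [crossNonInv, Finset.filter_true_of_mem, Finset.card_product]
  rintro ⟨x, y⟩ hxy
  exact h x (Finset.mem_product.mp hxy).1 y (Finset.mem_product.mp hxy).2

theorem crossNonInv_lt_mul {B C : Finset ℕ} {x y : ℕ} (hx : x ∈ B) (hy : y ∈ C)
    (hyx : y ≤ x) : crossNonInv B C < B.card * C.card := by
  rw [← Finset.card_product]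
  exact Finset.card_lt_card (Finset.filter_ssubset.mpr
    ⟨(x, y), Finset.mem_product.mpr ⟨hx, hy⟩, not_lt.mpr hyx⟩)

theorem crossNonInv_image {f : ℕ → ℕ} {S B C : Finset ℕ} (hf : StrictMonoOn f S)
    (hB : B ⊆ S) (hC : C ⊆ S) : crossNonInv (B.image f) (C.image f) = crossNonInv B C := by
  have hinj : Set.InjOn (Prod.map f f) ((B ×ˢ C).filter fun xy => xy.1 < xy.2 : Finset _) := by
    rintro ⟨x, y⟩ hxy ⟨x', y'⟩ hxy' h
    simp only [Finset.coe_filter, Finset.mem_product] at hxy hxy'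
    simp only [Prod.map, Prod.mk.injEq] at h ⊢
    exact ⟨hf.injOn (hB hxy.1.1) (hB hxy'.1.1) h.1, hf.injOn (hC hxy.1.2) (hC hxy'.1.2) h.2⟩
  rw [crossNonInv, crossNonInv, ← Finset.card_image_of_injOn hinj]
  congr 1
  ext ⟨u, v⟩
  simp only [Finset.mem_filter, Finset.mem_product, Finset.mem_image, Prod.exists, Prod.map,
    Prod.mk.injEq]
  constructor
  · rintro ⟨⟨⟨x, hx, rfl⟩, ⟨y, hy, rfl⟩⟩, hlt⟩
    exact ⟨x, y, ⟨⟨hx, hy⟩, (hf.lt_iff_lt (hB hx) (hC hy)).mp hlt⟩, rfl, rfl⟩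
  · rintro ⟨x, y, ⟨⟨hx, hy⟩, hlt⟩, rfl, rfl⟩
    exact ⟨⟨⟨x, hx, rfl⟩, ⟨y, hy, rfl⟩⟩, hf (hB hx) (hC hy) hlt⟩

theorem nonInv_map_image {f : ℕ → ℕ} {S : Finset ℕ} {L : SC} (hf : StrictMonoOn f S)
    (hL : ∀ B ∈ L, B ⊆ S) : nonInv (L.map (image f)) = nonInv L := by
  induction L with
  | nil => rfl
  | cons B L ih =>
    have hg : ground L ⊆ S := fun x hx => by
      obtain ⟨C, hC, hxC⟩ := mem_ground.mp hx
      exact hL C (List.mem_cons_of_mem _ hC) hxC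
    simp only [List.map_cons, nonInv, ground_map_image]
    rw [crossNonInv_image hf (hL B List.mem_cons_self) hg,
      ih fun C hC => hL C (List.mem_cons_of_mem _ hC)]

theorem disjoint_ground_right {B : Finset ℕ} {L : SC} (h : ∀ C ∈ L, Disjoint B C) :
    Disjoint B (ground L) := by
  rw [Finset.disjoint_right]
  intro x hx hxB
  obtain ⟨C, hC, hxC⟩ := mem_ground.mp hx
  exact Finset.disjoint_left.mp (h C hC) hxB hxC

theorem nonInv_append {L₁ L₂ : SC} (h₁ : L₁.Pairwise Disjoint)
    (h : Disjoint (ground L₁) (ground L₂)) :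
    nonInv (L₁ ++ L₂) =
      nonInv L₁ + crossNonInv (ground L₁) (ground L₂) + nonInv L₂ := by
  induction L₁ with
  | nil => simp [nonInv, ground, crossNonInv]
  | cons B L ih =>
    obtain ⟨hB, hL⟩ := List.pairwise_cons.mp h₁
    rw [ground_cons, Finset.disjoint_union_left] at h
    simp only [List.cons_append, nonInv, ground_append, ground_cons]
    rw [crossNonInv_union_right h.2, ih hL h.2,
      crossNonInv_union_left (disjoint_ground_right hB)]
    ring

theorem nonInv_relabelSC {p : ℕ} {P : SC} {T : Finset ℕ} (hP : IsSetComp p P)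
    (hT : T.card = p) : nonInv (relabelSC (Icc 1 p) T P) = nonInv P :=
  nonInv_map_image (strictMonoOn_relabelFun hT) fun _ hB => IsSetCompOn.subset hP hB

theorem relabelSC_Icc_Icc {q : ℕ} {Q : SC} (hQ : IsSetComp q Q) (a : ℕ) :
    relabelSC (Icc 1 q) (Icc (a + 1) (a + q)) Q = shiftSC a Q :=
  List.map_congr_left fun _ hB =>
    Finset.image_congr fun _ hx => relabelFun_Icc_Icc (IsSetCompOn.subset hQ hB hx)

theorem Icc_sdiff_Icc (p q : ℕ) :
    Icc 1 (p + q) \ Icc 1 p = Icc (p + 1) (p + q) := by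
  ext x; simp only [Finset.mem_sdiff, mem_Icc]; omega

theorem card_Icc_sdiff {p q : ℕ} {A : Finset ℕ} (hA : A ⊆ Icc 1 (p + q))
    (hcard : A.card = p) : (Icc 1 (p + q) \ A).card = q := by
  rw [Finset.card_sdiff_of_subset hA, Nat.card_Icc, hcard]; omega

def hatTerm (P Q : SC) (A : Finset ℕ) : SC :=
  relabelSC (Icc 1 (maxG P)) A P ++
    relabelSC (Icc 1 (maxG Q)) (Icc 1 (maxG P + maxG Q) \ A) Q

theorem hatB_eq_sum (P Q : SC) :
    hatB R P Q = ∑ A ∈ (Icc 1 (maxG P + maxG Q)).powerset.filter (·.card = maxG P),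
      single (hatTerm P Q A) 1 := rfl

section HatTerm

variable {p q : ℕ} {P Q : SC}

theorem isSetComp_hatTerm (hP : IsSetComp p P) (hQ : IsSetComp q Q) {A : Finset ℕ}
    (hA : A ⊆ Icc 1 (p + q)) (hcard : A.card = p) :
    IsSetComp (p + q) (hatTerm P Q A) ∧
      nonInv (hatTerm P Q A) = nonInv P + crossNonInv A (Icc 1 (p + q) \ A) + nonInv Q := by
  have hcard' := card_Icc_sdiff hA hcard
  have h₁ := isSetCompOn_relabelSC hP hcard
  have h₂ := isSetCompOn_relabelSC hQ hcard'
  have hdisj : Disjoint A (Icc 1 (p + q) \ A) := Finset.disjoint_sdiff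
  rw [hatTerm, hP.maxG_eq, hQ.maxG_eq]
  refine ⟨?_, ?_⟩
  · have := h₁.append h₂ hdisj
    rwa [Finset.union_sdiff_of_subset hA] at this
  · rw [nonInv_append h₁.2.1 (by rwa [h₁.2.2, h₂.2.2]), h₁.2.2, h₂.2.2,
      nonInv_relabelSC hP hcard, nonInv_relabelSC hQ hcard']

theorem hatTerm_Icc (hP : IsSetComp p P) (hQ : IsSetComp q Q) :
    hatTerm P Q (Icc 1 p) = barMul P Q := by
  have hPP : relabelSC (Icc 1 p) (Icc 1 p) P = P := by
    simpa [shiftSC, List.map_id'' fun _ => Finset.image_id'] using relabelSC_Icc_Icc hP 0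
  rw [hatTerm, barMul, hP.maxG_eq, hQ.maxG_eq, Icc_sdiff_Icc, hPP, relabelSC_Icc_Icc hQ]

theorem isSetComp_barMul (hP : IsSetComp p P) (hQ : IsSetComp q Q) :
    IsSetComp (p + q) (barMul P Q) ∧ nonInv (barMul P Q) = nonInv P + p * q + nonInv Q := by
  have hcross : crossNonInv (Icc 1 p) (Icc (p + 1) (p + q)) = p * q := by
    rw [crossNonInv_eq_mul fun x hx y hy => by simp only [mem_Icc] at hx hy; omega]
    simp
  obtain ⟨hsc, hnonInv⟩ :=
    isSetComp_hatTerm hP hQ (Icc_subset_Icc_right (by omega)) (by simp : (Icc 1 p).card = p)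
  rw [hatTerm_Icc hP hQ] at hsc hnonInv
  rw [Icc_sdiff_Icc, hcross] at hnonInv
  exact ⟨hsc, hnonInv⟩

end HatTerm

theorem crossNonInv_lt_of_ne_Icc {p q : ℕ} {A : Finset ℕ} (hA : A ⊆ Icc 1 (p + q))
    (hcard : A.card = p) (hne : A ≠ Icc 1 p) :
    crossNonInv A (Icc 1 (p + q) \ A) < p * q := by
  have hIcc : (Icc 1 p).card = p := by simp
  obtain ⟨a, haA, hpa⟩ : ∃ a ∈ A, p < a := by
    by_contra! h
    refine hne (Finset.eq_of_subset_of_card_le (fun a ha => ?_) (by omega))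
    have := mem_Icc.mp (hA ha)
    exact mem_Icc.mpr ⟨this.1, h a ha⟩
  obtain ⟨b, hb, hbA⟩ : ∃ b ∈ Icc 1 p, b ∉ A := by
    by_contra! h
    exact hne (Finset.eq_of_subset_of_card_le h (by omega)).symm
  have hcard' := card_Icc_sdiff hA hcard
  rw [mem_Icc] at hb
  have hb' : b ∈ Icc 1 (p + q) \ A :=
    Finset.mem_sdiff.mpr ⟨mem_Icc.mpr ⟨hb.1, by omega⟩, hbA⟩
  have hba : b ≤ a := by omega
  simpa [hcard, hcard'] using crossNonInv_lt_mul haA hb' hba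

theorem hatL_single_single (P Q : SC) :
    hatL R (single P 1) (single Q 1) = hatB R P Q := by
  simp [hatL]

section HatB

variable {p q : ℕ} {P Q : SC}

theorem hatB_sub_single_barMul_mem (hP : IsSetComp p P) (hQ : IsSetComp q Q) :
    hatB R P Q - single (barMul P Q) 1 ∈
      supported R R {K | IsSetComp (p + q) K ∧ nonInv K < nonInv (barMul P Q)} := by
  have hIcc : Icc 1 p ∈
      (Icc 1 (maxG P + maxG Q)).powerset.filter (·.card = maxG P) := by
    simp [hP.maxG_eq, hQ.maxG_eq, Icc_subset_Icc_right]
  rw [hatB_eq_sum, ← Finset.add_sum_erase _ _ hIcc, hatTerm_Icc hP hQ, add_sub_cancel_left]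
  refine Submodule.sum_mem _ fun A hA => single_mem_supported R 1 ?_
  obtain ⟨hne, hA⟩ := Finset.mem_erase.mp hA
  rw [Finset.mem_filter, Finset.mem_powerset, hP.maxG_eq, hQ.maxG_eq] at hA
  obtain ⟨hsc, hnonInv⟩ := isSetComp_hatTerm hP hQ hA.1 hA.2
  have := crossNonInv_lt_of_ne_Icc hA.1 hA.2 hne
  exact ⟨hsc, by rw [hnonInv, (isSetComp_barMul hP hQ).2]; omega⟩

theorem hatL_single_mem_supported (hP : IsSetComp p P) {s : ℕ} {e : FM R}
    (he : e ∈ supported R R {K | IsSetComp q K ∧ nonInv K < s}) :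
    hatL R (single P 1) e ∈
      supported R R {K | IsSetComp (p + q) K ∧ nonInv K < nonInv P + p * q + s} := by
  suffices h : supported R R {K | IsSetComp q K ∧ nonInv K < s} ≤
      Submodule.comap (hatL R (single P 1)) (supported R R
        {K | IsSetComp (p + q) K ∧ nonInv K < nonInv P + p * q + s}) from h he
  rw [supported_eq_span_single, Submodule.span_le]
  rintro _ ⟨K, ⟨hK, hKs⟩, rfl⟩
  rw [SetLike.mem_coe, Submodule.mem_comap, hatL_single_single, hatB_eq_sum]
  refine Submodule.sum_mem _ fun A hA => single_mem_supported R 1 ?_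
  rw [Finset.mem_filter, Finset.mem_powerset, hP.maxG_eq, hK.maxG_eq] at hA
  obtain ⟨hsc, hnonInv⟩ := isSetComp_hatTerm hP hK hA.1 hA.2
  have := crossNonInv_le A (Icc 1 (p + q) \ A)
  rw [hA.2, card_Icc_sdiff hA.1 hA.2] at this
  exact ⟨hsc, by rw [hnonInv]; omega⟩

end HatB

def barProd (F : List SC) : SC := F.foldr barMul []

theorem isSetComp_nil : IsSetComp 0 [] := ⟨by simp, by simp, rfl⟩

theorem barProd_cons (P : SC) (F : List SC) : barProd (P :: F) = barMul P (barProd F) := rfl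

theorem hatProdList_sub_single_barProd_mem {F : List SC} (hF : ∀ Q ∈ F, ∃ m, IsSetComp m Q) :
    ∃ n, IsSetComp n (barProd F) ∧ hatProdList F - single (barProd F) 1 ∈
      supported ℤ ℤ {K | IsSetComp n K ∧ nonInv K < nonInv (barProd F)} := by
  induction F with
  | nil => exact ⟨0, isSetComp_nil, by simp [hatProdList, barProd]⟩
  | cons P F ih =>
    obtain ⟨p, hP⟩ := hF P List.mem_cons_self
    obtain ⟨n, hn, he⟩ := ih fun Q hQ => hF Q (List.mem_cons_of_mem _ hQ)
    obtain ⟨hsc, hnonInv⟩ := isSetComp_barMul hP hn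
    refine ⟨p + n, hsc, ?_⟩
    have hsplit : hatProdList (P :: F) - single (barProd (P :: F)) 1 =
        (hatB ℤ P (barProd F) - single (barMul P (barProd F)) 1) +
          hatL ℤ (single P 1) (hatProdList F - single (barProd F) 1) := by
      rw [map_sub, hatL_single_single, barProd_cons]
      change hatL ℤ (single P 1) (hatProdList F) - _ = _
      abel
    rw [hsplit, barProd_cons]
    refine add_mem (hatB_sub_single_barMul_mem ℤ hP hn) ?_
    rw [hnonInv]
    exact hatL_single_mem_supported ℤ hP he

theorem Reduced.ne_nil {m : ℕ} {P : SC} (h : Reduced m P) : P ≠ [] := by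
  rw [Ne, IsSetCompOn.eq_nil_iff h.1, Icc_eq_empty_iff]
  exact not_not.mpr h.2.1

theorem Reduced.ground_take_ne {n : ℕ} {P : SC} (h : Reduced n P) {a : ℕ} (ha : 0 < a)
    (haP : a < P.length) (m : ℕ) : ground (P.take a) ≠ Icc 1 m := by
  intro hm
  rcases lt_or_ge m n with hmn | hmn
  · exact h.2.2 a m ha haP hmn hm
  obtain ⟨-, hdrop, hdisj, hunion⟩ :=
    IsSetCompOn.of_append (S := Icc 1 n) (L₁ := P.take a) (L₂ := P.drop a)
      (by rw [List.take_append_drop]; exact h.1)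
  obtain ⟨B, hB⟩ := List.exists_mem_of_ne_nil (P.drop a) (by simp; omega)
  obtain ⟨x, hx⟩ := hdrop.1 B hB
  have hxd := subset_ground hB hx
  have hxn : x ∈ Icc 1 n := hunion ▸ Finset.mem_union_right _ hxd
  refine Finset.disjoint_left.mp hdisj ?_ hxd
  rw [hm]
  exact Icc_subset_Icc_right hmn hxn

theorem Reduced.eq_of_append_eq {m m' : ℕ} {P P' X X' : SC} (hP : Reduced m P)
    (hP' : Reduced m' P') (h : P ++ X = P' ++ X') : P = P' ∧ X = X' := by
  refine List.append_inj h ?_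
  by_contra hne
  wlog hlt : P.length < P'.length generalizing m m' P P' X X'
  · exact this hP' hP h.symm (Ne.symm hne) (by omega)
  have htake := congr_arg (List.take P.length) h
  rw [List.take_left, List.take_append_of_le_length hlt.le] at htake
  exact hP'.ground_take_ne (List.length_pos_of_ne_nil hP.ne_nil) hlt m (htake ▸ hP.1.2.2)

theorem shiftSC_injective (m : ℕ) : Function.Injective (shiftSC m) :=
  List.map_injective_iff.mpr (Finset.image_injective (add_left_injective m))

theorem barProd_injective {F F' : List SC} (hF : ∀ Q ∈ F, ∃ m, Reduced m Q)
    (hF' : ∀ Q ∈ F', ∃ m, Reduced m Q) (h : barProd F = barProd F') : F = F' := by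
  induction F generalizing F' with
  | nil =>
    cases F' with
    | nil => rfl
    | cons P' G' =>
      obtain ⟨m', hm'⟩ := hF' P' List.mem_cons_self
      exact absurd (List.append_eq_nil_iff.mp h.symm).1 hm'.ne_nil
  | cons P G ih =>
    cases F' with
    | nil =>
      obtain ⟨m, hm⟩ := hF P List.mem_cons_self
      exact absurd (List.append_eq_nil_iff.mp h).1 hm.ne_nil
    | cons P' G' =>
      obtain ⟨m, hm⟩ := hF P List.mem_cons_self
      obtain ⟨m', hm'⟩ := hF' P' List.mem_cons_self
      obtain ⟨rfl, hshift⟩ := hm.eq_of_append_eq hm' h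
      rw [ih (fun Q hQ => hF Q (List.mem_cons_of_mem _ hQ))
        (fun Q hQ => hF' Q (List.mem_cons_of_mem _ hQ)) (shiftSC_injective _ hshift)]

theorem isSetComp_unshift {m n : ℕ} {D : SC} (hD : IsSetCompOn (Icc (m + 1) n) D) :
    IsSetComp (n - m) (D.map (image (· - m))) ∧
      shiftSC m (D.map (image (· - m))) = D := by
  have himage : (Icc (m + 1) n).image (· - m) = Icc 1 (n - m) := by
    ext y
    simp only [Finset.mem_image, mem_Icc]
    exact ⟨by rintro ⟨x, hx, rfl⟩; omega, fun hy => ⟨y + m, by omega, by omega⟩⟩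
  refine ⟨?_, ?_⟩
  · have := hD.map_image (f := (· - m)) fun x hx y hy (hxy : x - m = y - m) => by
      simp only [Finset.coe_Icc, Set.mem_Icc] at hx hy
      omega
    rwa [himage] at this
  · rw [shiftSC, List.map_map]
    refine (List.map_congr_left fun B hB => ?_).trans (List.map_id D)
    calc (image (· + m) ∘ image (· - m)) B = B.image fun x => x :=
          Finset.image_image.trans (Finset.image_congr fun x hx => by
            have := mem_Icc.mp (hD.subset hB hx)
            simp only [Function.comp_apply]
            omega)
      _ = B := Finset.image_id'

theorem exists_eq_barMul_of_ground_take {n m a : ℕ} {R : SC} (hR : IsSetComp n R)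
    (h : ground (R.take a) = Icc 1 m) :
    IsSetComp m (R.take a) ∧ ∃ D, IsSetComp (n - m) D ∧ R = barMul (R.take a) D := by
  obtain ⟨htake, hdrop, hdisj, hunion⟩ :=
    IsSetCompOn.of_append (S := Icc 1 n) (L₁ := R.take a) (L₂ := R.drop a)
      (by rw [List.take_append_drop]; exact hR)
  rw [h] at htake hdisj hunion
  have hgd : ground (R.drop a) = Icc (m + 1) n := by
    rw [← Finset.union_sdiff_cancel_left hdisj, hunion]
    ext x; simp only [Finset.mem_sdiff, mem_Icc]; omega
  obtain ⟨hD, hshift⟩ := isSetComp_unshift (hgd ▸ hdrop)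
  refine ⟨htake, _, hD, ?_⟩
  rw [barMul, IsSetComp.maxG_eq htake, hshift, List.take_append_drop]

theorem exists_reduced_prefix {n : ℕ} {R : SC} (hR : IsSetComp n R) (hn : 0 < n) :
    ∃ m P D, 0 < m ∧ Reduced m P ∧ IsSetComp (n - m) D ∧ R = barMul P D := by
  classical
  have hR0 : R ≠ [] := by
    rw [Ne, IsSetCompOn.eq_nil_iff hR, Icc_eq_empty_iff]; omega
  have hex : ∃ a, 0 < a ∧ ∃ m, ground (R.take a) = Icc 1 m :=
    ⟨R.length, List.length_pos_of_ne_nil hR0, n, by rw [List.take_length]; exact hR.2.2⟩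
  obtain ⟨ha, m, hm⟩ := Nat.find_spec hex
  obtain ⟨hP, D, hD, hRD⟩ := exists_eq_barMul_of_ground_take hR hm
  have hm0 : 0 < m := by
    have : R.take (Nat.find hex) ≠ [] := by simp [hR0, ha.ne']
    rwa [Ne, IsSetCompOn.eq_nil_iff hP, Icc_eq_empty_iff, not_not] at this
  refine ⟨m, _, D, hm0, ⟨hP, hm0, fun a j ha0 hlt _ hj => ?_⟩, hD, hRD⟩
  rw [List.length_take] at hlt
  refine Nat.find_min hex (lt_min_iff.mp hlt).1 ⟨ha0, j, ?_⟩
  rwa [List.take_take, min_eq_left (lt_min_iff.mp hlt).1.le] at hj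

theorem exists_reduced_barProd_eq {n : ℕ} {R : SC} (hR : IsSetComp n R) :
    ∃ F : List SC, (∀ Q ∈ F, ∃ m, Reduced m Q) ∧ barProd F = R := by
  induction n using Nat.strong_induction_on generalizing R with
  | _ n ih =>
    rcases Nat.eq_zero_or_pos n with rfl | hn
    · exact ⟨[], by simp, ((IsSetCompOn.eq_nil_iff hR).mpr (by simp)).symm⟩
    obtain ⟨m, P, D, hm, hP, hD, rfl⟩ := exists_reduced_prefix hR hn
    obtain ⟨F, hF, rfl⟩ := ih (n - m) (by omega) hD
    refine ⟨P :: F, ?_, rfl⟩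
    rintro Q (_ | ⟨_, hQ⟩)
    exacts [⟨m, hP⟩, hF Q hQ]

theorem Tspan_eq_supported : Tspan R = supported R R {K | ∃ n, IsSetComp n K} := by
  rw [Tspan, supported_eq_span_single]
  congr 1
  ext f
  constructor
  · rintro ⟨n, P, hP, rfl⟩
    exact ⟨P, ⟨n, hP⟩, rfl⟩
  · rintro ⟨P, ⟨n, hP⟩, rfl⟩
    exact ⟨n, P, hP, rfl⟩

theorem RedSeq.isSetComp (F : RedSeq) : ∀ Q ∈ F.1, ∃ m, IsSetComp m Q :=
  fun Q hQ => (F.2 Q hQ).imp fun _ => And.left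

/-- **Theorem.** `(T_•, ∗̂)` is a free associative ℤ-algebra, freely generated by
the reduced set compositions: the symmetrized products `P⁽¹⁾ ∗̂ ⋯ ∗̂ P⁽ᵐ⁾` over
all finite sequences of reduced set compositions form a ℤ-basis of `T_•`. -/
theorem hat_free_algebra :
    LinearIndependent ℤ (fun F : RedSeq => hatProdList F.1) ∧
    Submodule.span ℤ (Set.range fun F : RedSeq => hatProdList F.1) = Tspan ℤ := by
  have hv : ∀ F : RedSeq, hatProdList F.1 - single (barProd F.1) 1 ∈
      supported ℤ ℤ ({K | ∃ n, IsSetComp n K} ∩ {K | nonInv K < nonInv (barProd F.1)}) := by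
    intro F
    obtain ⟨n, -, h⟩ := hatProdList_sub_single_barProd_mem F.isSetComp
    refine supported_mono ?_ h
    exact fun K hK => ⟨⟨n, hK.1⟩, hK.2⟩
  refine ⟨linearIndependent_of_unitriangular
    (fun F G h => Subtype.ext (barProd_injective F.2 G.2 h))
    fun F => supported_mono Set.inter_subset_right (hv F), ?_⟩
  rw [Tspan_eq_supported]
  refine span_range_eq_supported_of_unitriangular (lead := fun F : RedSeq => barProd F.1) hv
    (fun F => ?_) ?_
  · obtain ⟨n, hn, -⟩ := hatProdList_sub_single_barProd_mem F.isSetComp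
    exact ⟨n, hn⟩
  · rintro K ⟨n, hK⟩
    obtain ⟨F, hF, rfl⟩ := exists_reduced_barProd_eq hK
    exact ⟨⟨F, hF⟩, rfl⟩
end

section
/- The ℤ-linear map ι: S_• → T_• sending α ∈ S_n to ({α(1)},…,{α(n)}) is injective and is a morphism of graded bialgebras from (S_•, ×, δ̂) to (T_•, ∗̄, δ̂): for all permutations α, β one has ι(α × β) = ι(α) ∗̄ ι(β), and δ̂(ι(α)) = (ι ⊗ ι)(δ̂(α)). Hence (S_•, ×, δ̂) embeds into (T_•, ∗̄, δ̂) as a Hopf subalgebra. -/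
set_option linter.unreachableTactic false
set_option linter.unusedTactic false
set_option maxHeartbeats 1000000


open Finset

variable (R : Type) [CommRing R]

/-- `w` is the word `(α(1),…,α(n))` of a permutation `α ∈ S_n`. -/
def IsPermWord (n : ℕ) (w : List ℕ) : Prop := w.Nodup ∧ w.toFinset = Finset.Icc 1 n

/-- The embedding of permutations into set compositions:
`α ↦ ({α(1)},…,{α(n)})`. -/
def iotaW (w : List ℕ) : SC := w.map fun a => ({a} : Finset ℕ)

/-- Concatenation product of permutation words: `α × β = α · (β + n)`. -/
def concatW (u v : List ℕ) : List ℕ := u ++ v.map (· + u.length)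

/-- `st(w|_S)`: the subword of `w` of entries lying in `S`, standardized. -/
def stW (S : Finset ℕ) (w : List ℕ) : List ℕ :=
  (w.filter fun a => decide (a ∈ S)).map (rankIn S)

/-- The ℤ-linear embedding `ι : S_• → T_•`, `α ↦ ({α(1)},…,{α(n)})`. -/
noncomputable def iotaL : (List ℕ →₀ ℤ) →ₗ[ℤ] FM ℤ :=
  Finsupp.lift _ ℤ _ fun w => Finsupp.single (iotaW w) 1

/-- `ι ⊗ ι : S_• ⊗ S_• → T_• ⊗ T_•`. -/
noncomputable def iota2L : ((List ℕ × List ℕ) →₀ ℤ) →ₗ[ℤ] FM2 ℤ :=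
  Finsupp.lift _ ℤ _ fun uv => Finsupp.single (iotaW uv.1, iotaW uv.2) 1

/-- The cosymmetrized coproduct on `S_•`:
`δ̂(α) = Σ_{S ⊔ T = [n]} st(α|_S) ⊗ st(α|_T)`. -/
noncomputable def dHatS : (List ℕ →₀ ℤ) →ₗ[ℤ] ((List ℕ × List ℕ) →₀ ℤ) :=
  Finsupp.lift _ ℤ _ fun w =>
    ∑ A ∈ (Finset.Icc 1 w.length).powerset,
      Finsupp.single (stW A w, stW ((Finset.Icc 1 w.length) \ A) w) 1

/-
`ι` sends a permutation word to the composition into its singletons, so it is injective on the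
basis and turns every operation on words into the matching operation on compositions: taking the
blocks inside a set `A` and standardizing is the same whether one reads the singletons or the
letters, and concatenation with a shift is the restricted product once `maxG (ι α) = |α|`.
-/

lemma iotaW_injective : Function.Injective iotaW :=
  List.map_injective_iff.2 Finset.singleton_injective

lemma iotaL_eq_lmapDomain : iotaL = Finsupp.lmapDomain ℤ ℤ iotaW := by
  refine Finsupp.lhom_ext fun w c => ?_
  simp [iotaL, Finsupp.smul_single]

lemma ground_iotaW (w : List ℕ) : ground (iotaW w) = w.toFinset := by
  induction w with
  | nil => rfl
  | cons a w ih =>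
    rw [iotaW, List.map_cons, ground, List.foldr_cons, ← ground, ← iotaW, ih,
      List.toFinset_cons, Finset.insert_eq]

lemma sup_id_Icc_one (n : ℕ) : (Finset.Icc 1 n).sup id = n := by
  refine le_antisymm (Finset.sup_le fun x hx => (Finset.mem_Icc.1 hx).2) ?_
  rcases Nat.eq_zero_or_pos n with rfl | hn
  · exact Nat.zero_le _
  · exact Finset.le_sup (f := id) (Finset.mem_Icc.2 ⟨hn, le_rfl⟩)

namespace IsPermWord

variable {n : ℕ} {w : List ℕ}

lemma length_eq (h : IsPermWord n w) : w.length = n := by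
  simpa [h.2] using (List.toFinset_card_of_nodup h.1).symm

lemma maxG_iotaW (h : IsPermWord n w) : maxG (iotaW w) = w.length := by
  rw [maxG, ground_iotaW, h.2, sup_id_Icc_one, h.length_eq]

end IsPermWord

lemma iotaW_concatW (u v : List ℕ) :
    iotaW (concatW u v) = iotaW u ++ shiftSC u.length (iotaW v) := by
  simp [iotaW, concatW, shiftSC, Function.comp_def]

lemma restrictSC_iotaW (A : Finset ℕ) (w : List ℕ) :
    restrictSC A (iotaW w) = iotaW (stW A w) := by
  induction w with
  | nil => rfl
  | cons a w ih =>
    simp only [restrictSC, iotaW, stW, List.map_map, List.map_cons, List.filter_cons] at ih ⊢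
    by_cases ha : a ∈ A
    · simp [Finset.singleton_inter_of_mem ha, ha, ih]
    · simp [Finset.singleton_inter_of_notMem ha, ha, ih]

lemma dHatL_single_iotaW {n : ℕ} {w : List ℕ} (hw : IsPermWord n w) :
    dHatL ℤ (Finsupp.single (iotaW w) 1) = iota2L (dHatS (Finsupp.single w 1)) := by
  simp only [dHatL, dHatS, iota2L, Finsupp.lift_apply, Finsupp.sum_single_index, zero_smul,
    one_smul, map_sum, hw.maxG_iotaW, restrictSC_iotaW]

/-- **Theorem.** The ℤ-linear map `ι : S_• → T_•`, `α ↦ ({α(1)},…,{α(n)})`, is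
an injective morphism of graded bialgebras from `(S_•, ×, δ̂)` to
`(T_•, ∗̄, δ̂)` : `ι(α × β) = ι(α) ∗̄ ι(β)` and `δ̂(ι(α)) = (ι ⊗ ι)(δ̂(α))`.
Hence `(S_•, ×, δ̂)` embeds into `(T_•, ∗̄, δ̂)` as a Hopf subalgebra. -/
theorem perm_embedding_cocommutative :
    Function.Injective ⇑iotaL ∧
    (∀ (m k : ℕ) (α β : List ℕ), IsPermWord m α → IsPermWord k β →
        iotaW (concatW α β) = barMul (iotaW α) (iotaW β)) ∧
    (∀ (n : ℕ) (α : List ℕ), IsPermWord n α →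
        dHatL ℤ (Finsupp.single (iotaW α) 1) = iota2L (dHatS (Finsupp.single α 1))) := by
  refine ⟨?_, fun m k α β hα _ => ?_, fun n α hα => dHatL_single_iotaW hα⟩
  · rw [iotaL_eq_lmapDomain]
    exact Finsupp.mapDomain_injective iotaW_injective
  · rw [barMul, hα.maxG_iotaW, iotaW_concatW]
end

section
/- An increasing tree (T,λ) is left increasing (i.e. lies in the image of Inc) if and only if, for every pair of branchings b, b′ of T such that b is to the left of b′ (b ≺ b′ in the left-to-right order on B(T)) and the vertices of b and b′ do not lie on a common path connecting a leaf of T with the root of T, one has λ(b) < λ(b′). -/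
set_option linter.unreachableTactic false
set_option linter.unusedTactic false
set_option maxHeartbeats 1000000


open Finset

variable (R : Type) [CommRing R]

inductive PTree : Type
  | eps : PTree
  | wedge : PTree → PTree → List PTree → PTree

inductive LTree : Type
  | eps : LTree
  | wedge : ℕ → LTree → LTree → List LTree → LTree

namespace LTree

def levels : LTree → List ℕ
  | .eps => []
  | .wedge r t0 t1 rest =>
      r :: (t0.levels ++ t1.levels ++ (rest.attach.map (fun x => x.1.levels)).flatten)
decreasing_by all_goals (first
  | (have h := List.sizeOf_lt_of_mem x.2; simp_wf; simp at h; omega)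
  | (have h := List.sizeOf_lt_of_mem x.2; simp_wf; omega)
  | (simp_wf; omega))

def numLevels (t : LTree) : ℕ := t.levels.foldr max 0

def brLevels : LTree → List ℕ
  | .eps => []
  | .wedge r t0 t1 rest =>
      t0.brLevels ++ r :: t1.brLevels ++
        (rest.attach.map (fun x => r :: x.1.brLevels)).flatten
decreasing_by all_goals (first
  | (have h := List.sizeOf_lt_of_mem x.2; simp_wf; simp at h; omega)
  | (have h := List.sizeOf_lt_of_mem x.2; simp_wf; omega)
  | (simp_wf; omega))

def addLevels (c : ℕ) : LTree → LTree
  | .eps => .eps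
  | .wedge r t0 t1 rest =>
      .wedge (r + c) (t0.addLevels c) (t1.addLevels c)
        (rest.attach.map (fun x => x.1.addLevels c))
decreasing_by all_goals (first
  | (have h := List.sizeOf_lt_of_mem x.2; simp_wf; simp at h; omega)
  | (have h := List.sizeOf_lt_of_mem x.2; simp_wf; omega)
  | (simp_wf; omega))

end LTree

def Fgt : LTree → PTree
  | .eps => .eps
  | .wedge _ t0 t1 rest => .wedge (Fgt t0) (Fgt t1) (rest.attach.map (fun x => Fgt x.1))
decreasing_by all_goals (first
  | (have h := List.sizeOf_lt_of_mem x.2; simp_wf; simp at h; omega)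
  | (have h := List.sizeOf_lt_of_mem x.2; simp_wf; omega)
  | (simp_wf; omega))

def graftP (s : PTree) : PTree → PTree
  | .eps => s
  | .wedge t0 t1 rest => .wedge (graftP s t0) t1 rest

def Inc : PTree → LTree
  | .eps => .eps
  | .wedge t0 t1 rest =>
      let incs := Inc t0 :: Inc t1 :: rest.attach.map (fun x => Inc x.1)
      let offs := (incs.map LTree.numLevels).scanl (· + ·) 1
      match (incs.zip offs).map (fun p => p.1.addLevels p.2) with
      | s0 :: s1 :: srest => .wedge 1 s0 s1 srest
      | _ => .eps
decreasing_by all_goals (first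
  | (have h := List.sizeOf_lt_of_mem x.2; simp_wf; simp at h; omega)
  | (have h := List.sizeOf_lt_of_mem x.2; simp_wf; omega)
  | (simp_wf; omega))

def brPaths : LTree → List (List ℕ)
  | .eps => []
  | .wedge _ t0 t1 rest =>
      (brPaths t0).map (fun p => 0 :: p) ++
        ((((t1 :: rest).attach.map (fun x => brPaths x.1)).zipIdx.map
          (fun is => ([] : List ℕ) :: is.1.map (fun p => (is.2 + 1) :: p))).flatten)
decreasing_by all_goals (first
  | (have h := List.sizeOf_lt_of_mem x.2; simp_wf; simp at h; omega)
  | (have h := List.sizeOf_lt_of_mem x.2; simp_wf; omega)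
  | (simp_wf; omega))

def sigmaOf (t : LTree) : List (Finset ℕ) :=
  let w := t.brLevels
  (List.range (w.foldr max 0)).map fun i =>
    ((List.range w.length).filter (fun j => w.getD j 0 = i + 1)).toFinset.image (· + 1)

/-- The level function is strictly increasing from the root down, all levels
being `> lo`: this expresses that levels strictly increase along every path
joining a leaf to the root. -/
inductive IncrFrom : ℕ → LTree → Prop
  | eps (lo : ℕ) : IncrFrom lo .eps
  | wedge (lo r : ℕ) (t0 t1 : LTree) (rest : List LTree) :
      lo < r → IncrFrom r t0 → IncrFrom r t1 → (∀ t ∈ rest, IncrFrom r t) →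
      IncrFrom lo (.wedge r t0 t1 rest)

/-- An increasing tree: the level function is strictly increasing along every
path from a leaf to the root, and its set of values is `[k]` for some `k ≥ 0`
(it is standard). -/
def IsIncTree (t : LTree) : Prop :=
  IncrFrom 0 t ∧ t.levels.toFinset = Finset.Icc 1 t.numLevels

/-- Two vertices, recorded by their root-to-vertex paths of child indices, lie
on a common path connecting a leaf with the root iff one is an ancestor of the
other, i.e. iff one path is a prefix of the other. -/
def OnCommonPath (p q : List ℕ) : Prop := p <+: q ∨ q <+: p

/-!
Record a branching by its vertex (the root-to-vertex path) and its level. Branchings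
under different children of a vertex never lie on a common path, while a branching at the
vertex itself lies on a common path with every branching below it. Hence the condition of
the theorem holds for `⋁(T₀, …, T_m)` iff it holds for every `Tᵢ` and all levels of `Tᵢ`
are below all levels of `Tⱼ` for `i < j`. `Inc` produces trees with this recursive property,
since it stacks the level sets of the children one above the other. Conversely, if such a
tree has an interval as its set of levels, the root carries the least level and the level
sets of the children are forced to be consecutive intervals above it: this is exactly how
`Inc` distributes the levels, so by induction the tree is `Inc` of its underlying tree.
-/

lemma eq_Icc_of_union_eq_Icc {A B : Finset ℕ} {a M : ℕ} (hAB : A ∪ B = Icc (a + 1) M)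
    (hlt : ∀ x ∈ A, ∀ y ∈ B, x < y) : A = Icc (a + 1) (a + #A) ∧ B = Icc (a + #A + 1) M := by
  have hmem (y : ℕ) : y ∈ A ∪ B ↔ a + 1 ≤ y ∧ y ≤ M := by rw [hAB, mem_Icc]
  have hA : A = Icc (a + 1) (a + #A) := by
    refine eq_of_subset_of_card_le (fun x hx => ?_) (by simp)
    have hxM := (hmem x).1 (mem_union_left B hx)
    have hdown : Icc (a + 1) x ⊆ A := fun y hy => by
      rw [mem_Icc] at hy
      obtain hyA | hyB := mem_union.1 ((hmem y).2 ⟨hy.1, hy.2.trans hxM.2⟩)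
      · exact hyA
      · exact absurd (hlt x hx y hyB) (by omega)
    have := card_le_card hdown
    simp only [Nat.card_Icc, mem_Icc] at this ⊢
    omega
  refine ⟨hA, ext fun y => ?_⟩
  have hyA : y ∈ A ↔ a + 1 ≤ y ∧ y ≤ a + #A := (Finset.ext_iff.1 hA y).trans mem_Icc
  rw [mem_Icc]
  constructor
  · intro hyB
    have := (hmem y).1 (mem_union_right A hyB)
    have : y ∉ A := fun hyA' => lt_irrefl y (hlt y hyA' y hyB)
    rw [hyA] at this
    omega
  · intro hy
    exact (mem_union.1 ((hmem y).2 ⟨by omega, hy.2⟩)).resolve_left (by rw [hyA]; omega)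

namespace LTree

lemma induction {P : LTree → Prop} (eps : P .eps)
    (wedge : ∀ r t0 t1 rest, (∀ u ∈ t0 :: t1 :: rest, P u) → P (.wedge r t0 t1 rest)) :
    ∀ t, P t
  | .eps => eps
  | .wedge r t0 t1 rest => wedge r t0 t1 rest fun u _ => induction eps wedge u
decreasing_by
  rcases List.mem_cons.1 ‹u ∈ _› with rfl | hu
  · simp_wf; omega
  rcases List.mem_cons.1 hu with rfl | hu
  · simp_wf; omega
  · have := List.sizeOf_lt_of_mem hu; simp_wf; omega

@[simp] lemma levels_eps : levels .eps = [] := by simp [levels]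

@[simp] lemma levels_wedge (r : ℕ) (t0 t1 : LTree) (rest : List LTree) :
    (wedge r t0 t1 rest).levels = r :: (t0 :: t1 :: rest).flatMap levels := by
  simp [levels, List.flatMap_def]

@[simp] lemma brLevels_eps : brLevels .eps = [] := by simp [brLevels]

@[simp] lemma brLevels_wedge (r : ℕ) (t0 t1 : LTree) (rest : List LTree) :
    (wedge r t0 t1 rest).brLevels = t0.brLevels ++ (t1 :: rest).flatMap (r :: ·.brLevels) := by
  simp [brLevels, List.flatMap_def]

@[simp] lemma addLevels_eps (c : ℕ) : addLevels c .eps = .eps := by simp [addLevels]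

@[simp] lemma addLevels_wedge (c r : ℕ) (t0 t1 : LTree) (rest : List LTree) :
    (wedge r t0 t1 rest).addLevels c
      = wedge (r + c) (t0.addLevels c) (t1.addLevels c) (rest.map (addLevels c)) := by
  simp [addLevels]

@[simp] lemma levels_addLevels (c : ℕ) (t : LTree) :
    (t.addLevels c).levels = t.levels.map (· + c) := by
  induction t using LTree.induction with
  | eps => simp
  | wedge r t0 t1 rest ih =>
    simp only [List.forall_mem_cons] at ih
    simp [List.map_flatMap, List.flatMap_map, ih.1, ih.2.1]
    exact List.flatMap_congr ih.2.2

@[simp] lemma brLevels_addLevels (c : ℕ) (t : LTree) :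
    (t.addLevels c).brLevels = t.brLevels.map (· + c) := by
  induction t using LTree.induction with
  | eps => simp
  | wedge r t0 t1 rest ih =>
    simp only [List.forall_mem_cons] at ih
    simp [List.map_flatMap, List.flatMap_map, ih.1, ih.2.1]
    exact List.flatMap_congr fun u hu => by simp [ih.2.2 u hu]

@[simp] lemma addLevels_zero (t : LTree) : t.addLevels 0 = t := by
  induction t using LTree.induction with
  | eps => simp
  | wedge r t0 t1 rest ih =>
    simp only [List.forall_mem_cons] at ih
    simpa [ih.1, ih.2.1] using List.map_congr_left ih.2.2

lemma addLevels_addLevels (a b : ℕ) (t : LTree) :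
    (t.addLevels a).addLevels b = t.addLevels (a + b) := by
  induction t using LTree.induction with
  | eps => simp
  | wedge r t0 t1 rest ih =>
    simp only [List.forall_mem_cons] at ih
    simpa [ih.1, ih.2.1, Nat.add_assoc] using List.map_congr_left ih.2.2

lemma mem_brLevels {t : LTree} {x : ℕ} : x ∈ t.brLevels ↔ x ∈ t.levels := by
  induction t using LTree.induction with
  | eps => simp
  | wedge r t0 t1 rest ih =>
    simp only [brLevels_wedge, levels_wedge, List.mem_append, List.mem_flatMap, List.mem_cons]
    constructor
    · rintro (h | ⟨u, hu, rfl | h⟩)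
      · exact Or.inr ⟨t0, Or.inl rfl, (ih t0 List.mem_cons_self).1 h⟩
      · exact Or.inl rfl
      · exact Or.inr ⟨u, Or.inr hu, (ih u (List.mem_cons_of_mem _ (List.mem_cons.2 hu))).1 h⟩
    · rintro (rfl | ⟨u, rfl | hu, h⟩)
      · exact Or.inr ⟨t1, Or.inl rfl, Or.inl rfl⟩
      · exact Or.inl ((ih u List.mem_cons_self).2 h)
      · exact Or.inr ⟨u, hu, Or.inr ((ih u (List.mem_cons_of_mem _ (List.mem_cons.2 hu))).2 h)⟩

lemma numLevels_eq_sup (t : LTree) : t.numLevels = t.levels.toFinset.sup id := by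
  rw [numLevels]
  induction t.levels with
  | nil => rfl
  | cons a l ih => simp [ih]

lemma le_numLevels {t : LTree} {x : ℕ} (hx : x ∈ t.levels) : x ≤ t.numLevels := by
  rw [numLevels_eq_sup]
  exact le_sup (f := id) (List.mem_toFinset.2 hx)

lemma numLevels_eq_of_toFinset_levels {t : LTree} {k : ℕ}
    (h : t.levels.toFinset = Icc 1 k) : t.numLevels = k := by
  rw [numLevels_eq_sup, h]
  rcases Nat.eq_zero_or_pos k with rfl | hk
  · rfl
  · exact le_antisymm (Finset.sup_le fun x hx => (mem_Icc.1 hx).2)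
      (le_sup (f := id) (mem_Icc.2 ⟨hk, le_rfl⟩))

lemma numLevels_eq_of_addLevels_eq {s t : LTree} {c k : ℕ} (hst : s.addLevels c = t)
    (ht : t.levels.toFinset = Icc (c + 1) (c + k)) : s.numLevels = k := by
  refine numLevels_eq_of_toFinset_levels (Finset.image_injective (add_left_injective c) ?_)
  rw [Finset.image_add_right_Icc, Nat.add_comm 1, Nat.add_comm k, ← ht, ← hst]
  ext
  simp

def node (r : ℕ) : List LTree → LTree
  | t0 :: t1 :: rest => wedge r t0 t1 rest
  | _ => eps

lemma addLevels_node (c r : ℕ) (l : List LTree) :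
    (node r l).addLevels c = node (r + c) (l.map (addLevels c)) := by
  rcases l with _ | ⟨t0, _ | ⟨t1, rest⟩⟩ <;> simp [node]

lemma mem_levels_node {r x : ℕ} {l : List LTree} (hx : x ∈ (node r l).levels) :
    x = r ∨ ∃ u ∈ l, x ∈ u.levels := by
  rcases l with _ | ⟨t0, _ | ⟨t1, rest⟩⟩
  · simp [node] at hx
  · simp [node] at hx
  · simpa [node] using hx

def stackFrom (b : ℕ) : List LTree → List LTree
  | [] => []
  | u :: l => u.addLevels b :: stackFrom (b + u.numLevels) l

lemma map_addLevels_stackFrom (c b : ℕ) (l : List LTree) :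
    (stackFrom b l).map (addLevels c) = stackFrom (b + c) l := by
  induction l generalizing b with
  | nil => rfl
  | cons u l ih => simp [stackFrom, addLevels_addLevels, ih, Nat.add_right_comm]

lemma mem_stackFrom {b : ℕ} {l : List LTree} {v : LTree} (hv : v ∈ stackFrom b l) :
    ∃ u ∈ l, ∃ b' ≥ b, v = u.addLevels b' := by
  induction l generalizing b with
  | nil => simp [stackFrom] at hv
  | cons u l ih =>
    rcases List.mem_cons.1 hv with rfl | hv
    · exact ⟨u, List.mem_cons_self, b, le_rfl, rfl⟩
    · obtain ⟨w, hw, b', hb', rfl⟩ := ih hv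
      exact ⟨w, List.mem_cons_of_mem _ hw, b', by omega, rfl⟩

lemma incrFrom_wedge_iff {lo r : ℕ} {t0 t1 : LTree} {rest : List LTree} :
    IncrFrom lo (wedge r t0 t1 rest) ↔ lo < r ∧ ∀ u ∈ t0 :: t1 :: rest, IncrFrom r u := by
  constructor
  · rintro ⟨⟩
    simp_all
  · rintro ⟨hr, h⟩
    simp only [List.forall_mem_cons] at h
    exact .wedge lo r t0 t1 rest hr h.1 h.2.1 h.2.2

lemma IncrFrom.mono {lo lo' : ℕ} {t : LTree} (h : IncrFrom lo t) (hlo : lo' ≤ lo) :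
    IncrFrom lo' t := by
  cases h with
  | eps => exact .eps lo'
  | wedge _ r t0 t1 rest hr h0 h1 hrest => exact .wedge lo' r t0 t1 rest (by omega) h0 h1 hrest

lemma IncrFrom.lt_of_mem_levels {lo x : ℕ} {t : LTree} (h : IncrFrom lo t)
    (hx : x ∈ t.levels) : lo < x := by
  induction t using LTree.induction generalizing lo with
  | eps => simp at hx
  | wedge r t0 t1 rest ih =>
    obtain ⟨hr, hch⟩ := incrFrom_wedge_iff.1 h
    rcases List.mem_cons.1 (levels_wedge r t0 t1 rest ▸ hx) with rfl | hx
    · exact hr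
    · obtain ⟨u, hu, hxu⟩ := List.mem_flatMap.1 hx
      exact hr.trans (ih u hu (hch u hu) hxu)

def LevelsLT (a b : LTree) : Prop := ∀ x ∈ a.levels, ∀ y ∈ b.levels, x < y

lemma lt_of_mem_stackFrom {b y : ℕ} {l : List LTree} (hpos : ∀ u ∈ l, ∀ x ∈ u.levels, 0 < x)
    {v : LTree} (hv : v ∈ stackFrom b l) (hy : y ∈ v.levels) : b < y := by
  obtain ⟨u, hu, b', hb', rfl⟩ := mem_stackFrom hv
  obtain ⟨x, hx, rfl⟩ := List.mem_map.1 (levels_addLevels b' u ▸ hy)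
  have := hpos u hu x hx
  omega

lemma pairwise_levelsLT_stackFrom {l : List LTree} (hpos : ∀ u ∈ l, ∀ x ∈ u.levels, 0 < x)
    (b : ℕ) : (stackFrom b l).Pairwise LevelsLT := by
  induction l generalizing b with
  | nil => exact .nil
  | cons u l ih =>
    simp only [List.forall_mem_cons] at hpos
    refine List.pairwise_cons.2 ⟨fun v hv x hx y hy => ?_, ih hpos.2 _⟩
    obtain ⟨x', hx', rfl⟩ := List.mem_map.1 (levels_addLevels b u ▸ hx)
    have := le_numLevels hx'
    have := lt_of_mem_stackFrom hpos.2 hv hy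
    omega

end LTree

open LTree

@[simp] lemma Fgt_eps : Fgt .eps = .eps := by simp [Fgt]

lemma Fgt_wedge (r : ℕ) (t0 t1 : LTree) (rest : List LTree) :
    Fgt (.wedge r t0 t1 rest) = .wedge (Fgt t0) (Fgt t1) (rest.map Fgt) := by
  simp [Fgt]

@[simp] lemma Inc_eps : Inc .eps = .eps := by simp [Inc]

lemma Inc_wedge (t0 t1 : PTree) (rest : List PTree) :
    Inc (.wedge t0 t1 rest) = node 1 (stackFrom 1 ((t0 :: t1 :: rest).map Inc)) := by
  have hzip (b : ℕ) (l : List LTree) :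
      (l.zip ((l.map numLevels).scanl (· + ·) b)).map (fun p => p.1.addLevels p.2)
        = stackFrom b l := by
    induction l generalizing b with
    | nil => rfl
    | cons u l ih => simp [stackFrom, ih]
  rw [Inc, List.attach_map_val, hzip]
  simp [stackFrom, node]

lemma PTree.induction {P : PTree → Prop} (eps : P .eps)
    (wedge : ∀ t0 t1 rest, (∀ u ∈ t0 :: t1 :: rest, P u) → P (.wedge t0 t1 rest)) :
    ∀ t, P t
  | .eps => eps
  | .wedge t0 t1 rest => wedge t0 t1 rest fun u _ => PTree.induction eps wedge u
decreasing_by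
  rcases List.mem_cons.1 ‹u ∈ _› with rfl | hu
  · simp_wf; omega
  rcases List.mem_cons.1 hu with rfl | hu
  · simp_wf; omega
  · have := List.sizeOf_lt_of_mem hu; simp_wf; omega

@[simp] lemma brPaths_eps : brPaths .eps = [] := by simp [brPaths]

def childPaths : ℕ → List LTree → List (List ℕ)
  | _, [] => []
  | k, u :: l => [] :: ((brPaths u).map (k :: ·) ++ childPaths (k + 1) l)

lemma brPaths_wedge (r : ℕ) (t0 t1 : LTree) (rest : List LTree) :
    brPaths (.wedge r t0 t1 rest) = (brPaths t0).map (0 :: ·) ++ childPaths 1 (t1 :: rest) := by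
  have hzip (n : ℕ) (l : List LTree) :
      (((l.map brPaths).zipIdx n).map fun is => [] :: is.1.map ((is.2 + 1) :: ·)).flatten
        = childPaths (n + 1) l := by
    induction l generalizing n with
    | nil => rfl
    | cons u l ih => simp [childPaths, ← ih]
  rw [brPaths, List.attach_map_val (f := brPaths), hzip]

lemma length_brPaths (t : LTree) : (brPaths t).length = t.brLevels.length := by
  induction t using LTree.induction with
  | eps => simp
  | wedge r t0 t1 rest ih =>
    have hch (k : ℕ) (l : List LTree) (hl : ∀ u ∈ l, (brPaths u).length = u.brLevels.length) :
        (childPaths k l).length = (l.flatMap (r :: ·.brLevels)).length := by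
      induction l generalizing k with
      | nil => rfl
      | cons u l ihl =>
        simp only [List.forall_mem_cons] at hl
        simp [childPaths, hl.1, ihl _ hl.2]
    rw [brPaths_wedge, brLevels_wedge, List.length_append, List.length_append, List.length_map,
      ih t0 List.mem_cons_self, hch 1 _ fun u hu => ih u (List.mem_cons_of_mem _ hu)]

namespace LTree

def branchings (t : LTree) : List (List ℕ × ℕ) := (brPaths t).zip t.brLevels

def branchingsUnder (k : ℕ) (u : LTree) : List (List ℕ × ℕ) :=
  u.branchings.map (Prod.map (k :: ·) id)

/-- `([], r)` is a branching of the root, which precedes every child but the first. -/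
def childBranchings (r : ℕ) : ℕ → List LTree → List (List ℕ × ℕ)
  | _, [] => []
  | k, u :: l => ([], r) :: (branchingsUnder k u ++ childBranchings r (k + 1) l)

lemma branchings_wedge (r : ℕ) (t0 t1 : LTree) (rest : List LTree) :
    (wedge r t0 t1 rest).branchings
      = branchingsUnder 0 t0 ++ childBranchings r 1 (t1 :: rest) := by
  have hzip (k : ℕ) (l : List LTree) :
      (childPaths k l).zip (l.flatMap (r :: ·.brLevels)) = childBranchings r k l := by
    induction l generalizing k with
    | nil => rfl
    | cons u l ih =>
      rw [childPaths, List.flatMap_cons, List.cons_append, List.zip_cons_cons,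
        List.zip_append (by simp [length_brPaths]), List.zip_map_left, ih]
      rfl
  rw [branchings, brPaths_wedge, brLevels_wedge,
    List.zip_append (by simp [length_brPaths]), List.zip_map_left, hzip]
  rfl

lemma brPaths_addLevels (c : ℕ) (t : LTree) : brPaths (t.addLevels c) = brPaths t := by
  induction t using LTree.induction with
  | eps => simp
  | wedge r t0 t1 rest ih =>
    have hch (k : ℕ) (l : List LTree) (hl : ∀ u ∈ l, brPaths (u.addLevels c) = brPaths u) :
        childPaths k (l.map (addLevels c)) = childPaths k l := by
      induction l generalizing k with
      | nil => rfl
      | cons u l ihl =>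
        simp only [List.forall_mem_cons] at hl
        simp [childPaths, hl.1, ihl _ hl.2]
    rw [addLevels_wedge, brPaths_wedge, brPaths_wedge, ih t0 List.mem_cons_self,
      ← hch 1 (t1 :: rest) fun u hu => ih u (List.mem_cons_of_mem _ hu)]
    rfl

lemma branchings_addLevels (c : ℕ) (t : LTree) :
    (t.addLevels c).branchings = t.branchings.map (Prod.map id (· + c)) := by
  rw [branchings, brPaths_addLevels, brLevels_addLevels, List.zip_map_right]
  rfl

lemma mem_levels_iff_branchings {t : LTree} {x : ℕ} :
    x ∈ t.levels ↔ ∃ a ∈ t.branchings, a.2 = x := by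
  rw [← mem_brLevels, branchings, ← List.mem_map,
    List.map_snd_zip (length_brPaths t).ge]

lemma levelsLT_iff_branchings {u v : LTree} :
    LevelsLT u v ↔ ∀ a ∈ u.branchings, ∀ b ∈ v.branchings, a.2 < b.2 := by
  simp only [LevelsLT, mem_levels_iff_branchings, forall_exists_index, and_imp]
  exact ⟨fun h a ha b hb => h _ a ha rfl _ b hb rfl,
    fun h _ a ha hax _ b hb hby => hax ▸ hby ▸ h a ha b hb⟩

end LTree

def OffPathLT (a b : List ℕ × ℕ) : Prop := ¬ OnCommonPath a.1 b.1 → a.2 < b.2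

lemma offPathLT_nil_left (x : ℕ) (b : List ℕ × ℕ) : OffPathLT ([], x) b :=
  fun h => (h (Or.inl List.nil_prefix)).elim

lemma offPathLT_nil_right (a : List ℕ × ℕ) (y : ℕ) : OffPathLT a ([], y) :=
  fun h => (h (Or.inr List.nil_prefix)).elim

lemma onCommonPath_cons_cons {k k' : ℕ} {p q : List ℕ} :
    OnCommonPath (k :: p) (k' :: q) ↔ k = k' ∧ OnCommonPath p q := by
  simp only [OnCommonPath, List.cons_prefix_cons]
  grind

@[simp] lemma offPathLT_cons_cons {k : ℕ} {p q : List ℕ} {x y : ℕ} :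
    OffPathLT (k :: p, x) (k :: q, y) ↔ OffPathLT (p, x) (q, y) := by
  simp [OffPathLT, onCommonPath_cons_cons]

lemma offPathLT_cons_cons_of_ne {k k' : ℕ} (hk : k ≠ k') {p q : List ℕ} {x y : ℕ} :
    OffPathLT (k :: p, x) (k' :: q, y) ↔ x < y := by
  simp [OffPathLT, onCommonPath_cons_cons, hk]

namespace LTree

def OffPathIncreasing (t : LTree) : Prop := t.branchings.Pairwise OffPathLT

lemma offPathIncreasing_eps : OffPathIncreasing .eps := by
  simp [OffPathIncreasing, branchings]

@[simp] lemma offPathIncreasing_addLevels_iff {c : ℕ} {t : LTree} :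
    (t.addLevels c).OffPathIncreasing ↔ t.OffPathIncreasing := by
  rw [OffPathIncreasing, OffPathIncreasing, branchings_addLevels, List.pairwise_map]
  exact List.Pairwise.iff fun a b => by simp [OffPathLT]

lemma pairwise_branchingsUnder {k : ℕ} {u : LTree} :
    (branchingsUnder k u).Pairwise OffPathLT ↔ u.OffPathIncreasing := by
  rw [branchingsUnder, List.pairwise_map, OffPathIncreasing]
  exact List.Pairwise.iff fun _ _ => offPathLT_cons_cons

lemma forall_branchingsUnder_iff {k k' : ℕ} (hk : k ≠ k') {u v : LTree} :
    (∀ a ∈ branchingsUnder k u, ∀ b ∈ branchingsUnder k' v, OffPathLT a b) ↔ LevelsLT u v := by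
  simp only [branchingsUnder, levelsLT_iff_branchings, List.forall_mem_map]
  exact forall₂_congr fun _ _ => forall₂_congr fun _ _ => offPathLT_cons_cons_of_ne hk

lemma forall_childBranchings_iff {r k n : ℕ} (hk : k < n) {u : LTree} {l : List LTree} :
    (∀ a ∈ branchingsUnder k u, ∀ b ∈ childBranchings r n l, OffPathLT a b)
      ↔ ∀ v ∈ l, LevelsLT u v := by
  induction l generalizing n with
  | nil => simp [childBranchings]
  | cons v l ih =>
    simp only [childBranchings, List.mem_cons, List.mem_append, or_imp, forall_and,
      forall_eq, offPathLT_nil_right, true_and, forall_branchingsUnder_iff hk.ne,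
      ih (Nat.lt_succ_of_lt hk)]

lemma pairwise_childBranchings {r n : ℕ} {l : List LTree} :
    (childBranchings r n l).Pairwise OffPathLT
      ↔ (∀ u ∈ l, u.OffPathIncreasing) ∧ l.Pairwise LevelsLT := by
  induction l generalizing n with
  | nil => simp [childBranchings]
  | cons u l ih =>
    rw [childBranchings, List.pairwise_cons, List.pairwise_append, pairwise_branchingsUnder, ih,
      forall_childBranchings_iff n.lt_succ_self, List.pairwise_cons, List.forall_mem_cons]
    simp only [offPathLT_nil_left, implies_true, true_and]
    tauto

lemma offPathIncreasing_wedge_iff {r : ℕ} {t0 t1 : LTree} {rest : List LTree} :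
    (wedge r t0 t1 rest).OffPathIncreasing
      ↔ (∀ u ∈ t0 :: t1 :: rest, u.OffPathIncreasing) ∧ (t0 :: t1 :: rest).Pairwise LevelsLT := by
  rw [OffPathIncreasing, branchings_wedge, List.pairwise_append, pairwise_branchingsUnder,
    pairwise_childBranchings, forall_childBranchings_iff Nat.zero_lt_one]
  simp only [List.forall_mem_cons, List.pairwise_cons]
  tauto

lemma offPathIncreasing_node (r : ℕ) {l : List LTree} (hl : ∀ u ∈ l, u.OffPathIncreasing)
    (hlt : l.Pairwise LevelsLT) : (node r l).OffPathIncreasing := by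
  rcases l with _ | ⟨t0, _ | ⟨t1, rest⟩⟩
  · exact offPathIncreasing_eps
  · exact offPathIncreasing_eps
  · exact offPathIncreasing_wedge_iff.2 ⟨hl, hlt⟩

lemma offPathIncreasing_iff_getD {t : LTree} :
    t.OffPathIncreasing ↔ ∀ i j : ℕ, i < j → j < (brPaths t).length →
      ¬ OnCommonPath ((brPaths t).getD i []) ((brPaths t).getD j []) →
      t.brLevels.getD i 0 < t.brLevels.getD j 0 := by
  have hlen := length_brPaths t
  rw [OffPathIncreasing, List.pairwise_iff_getElem]
  simp only [branchings, List.length_zip, List.getElem_zip, OffPathLT]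
  constructor
  · intro h i j hij hj
    rw [List.getD_eq_getElem _ _ (hij.trans hj), List.getD_eq_getElem _ _ hj,
      List.getD_eq_getElem _ _ (by omega), List.getD_eq_getElem _ _ (by omega)]
    exact h i j (by omega) (by omega) hij
  · intro h i j hi hj hij
    have := h i j hij (by omega)
    rwa [List.getD_eq_getElem _ _ (by omega), List.getD_eq_getElem _ _ (by omega),
      List.getD_eq_getElem _ _ (by omega), List.getD_eq_getElem _ _ (by omega)] at this

end LTree

lemma pos_of_mem_levels_Inc {s : PTree} {x : ℕ} (hx : x ∈ (Inc s).levels) : 0 < x := by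
  cases s with
  | eps => simp at hx
  | wedge t0 t1 rest =>
    rw [Inc_wedge] at hx
    obtain rfl | ⟨v, hv, hxv⟩ := mem_levels_node hx
    · exact Nat.one_pos
    · obtain ⟨u, -, b, hb, rfl⟩ := mem_stackFrom hv
      obtain ⟨y, -, rfl⟩ := List.mem_map.1 (levels_addLevels b u ▸ hxv)
      omega

lemma offPathIncreasing_Inc (s : PTree) : (Inc s).OffPathIncreasing := by
  induction s using PTree.induction with
  | eps => simpa using offPathIncreasing_eps
  | wedge t0 t1 rest ih =>
    rw [Inc_wedge]
    refine offPathIncreasing_node 1 (fun v hv => ?_)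
      (pairwise_levelsLT_stackFrom (fun u hu _ hx => ?_) 1)
    · obtain ⟨u, hu, b, -, rfl⟩ := mem_stackFrom hv
      obtain ⟨w, hw, rfl⟩ := List.mem_map.1 hu
      simpa using ih w hw
    · obtain ⟨w, -, rfl⟩ := List.mem_map.1 hu
      exact pos_of_mem_levels_Inc hx

lemma Inc_Fgt_wedge (r : ℕ) (t0 t1 : LTree) (rest : List LTree) :
    Inc (Fgt (.wedge r t0 t1 rest))
      = node 1 (stackFrom 1 ((t0 :: t1 :: rest).map fun u => Inc (Fgt u))) := by
  simp [Fgt_wedge, Inc_wedge, Function.comp_def]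

lemma stackFrom_map_Inc_Fgt {l : List LTree} {b M : ℕ}
    (hrec : ∀ u ∈ l, ∀ {c k : ℕ}, u.levels.toFinset = Icc (c + 1) (c + k) →
      (Inc (Fgt u)).addLevels c = u)
    (hlt : l.Pairwise LevelsLT) (hstd : (l.flatMap levels).toFinset = Icc (b + 1) M) :
    stackFrom b (l.map fun u => Inc (Fgt u)) = l := by
  induction l generalizing b with
  | nil => rfl
  | cons u l ih =>
    rw [List.forall_mem_cons] at hrec
    rw [List.pairwise_cons] at hlt
    rw [List.flatMap_cons, List.toFinset_append] at hstd
    obtain ⟨hu, hl⟩ := eq_Icc_of_union_eq_Icc hstd fun x hx y hy => by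
      obtain ⟨v, hv, hyv⟩ := List.mem_flatMap.1 (List.mem_toFinset.1 hy)
      exact hlt.1 v hv x (List.mem_toFinset.1 hx) y hyv
    have hIu := hrec.1 hu
    rw [List.map_cons, stackFrom, hIu, numLevels_eq_of_addLevels_eq hIu hu, ih hrec.2 hlt.2 hl]

theorem addLevels_Inc_Fgt {t : LTree} {c k : ℕ} (hinc : IncrFrom 0 t)
    (hstd : t.levels.toFinset = Icc (c + 1) (c + k)) (hord : t.OffPathIncreasing) :
    (Inc (Fgt t)).addLevels c = t := by
  induction t using LTree.induction generalizing c k with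
  | eps => simp
  | wedge r t0 t1 rest ih =>
    obtain ⟨-, hch⟩ := incrFrom_wedge_iff.1 hinc
    rw [levels_wedge, List.toFinset_cons, insert_eq] at hstd
    obtain ⟨hr, hstd'⟩ := eq_Icc_of_union_eq_Icc hstd fun x hx y hy => by
      obtain ⟨u, hu, hyu⟩ := List.mem_flatMap.1 (List.mem_toFinset.1 hy)
      exact mem_singleton.1 hx ▸ (hch u hu).lt_of_mem_levels hyu
    have hrc : r = c + 1 := by simpa using hr
    rw [card_singleton] at hstd'
    rw [offPathIncreasing_wedge_iff] at hord
    have hrec (u) (hu : u ∈ t0 :: t1 :: rest) {c k : ℕ}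
        (hstd : u.levels.toFinset = Icc (c + 1) (c + k)) : (Inc (Fgt u)).addLevels c = u :=
      ih u hu ((hch u hu).mono (Nat.zero_le r)) hstd (hord.1 u hu)
    rw [Inc_Fgt_wedge, addLevels_node, map_addLevels_stackFrom, Nat.add_comm 1 c,
      stackFrom_map_Inc_Fgt hrec hord.2 hstd', hrc]
    rfl

/-- **Lemma.** An increasing tree `(T,λ)` is left increasing (lies in the image
of `Inc`) iff for every pair of branchings `b ≺ b′` (in the left-to-right
order) whose vertices do not lie on a common path connecting a leaf with the
root, one has `λ(b) < λ(b′)`.  (Branchings are recorded by their position `i`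
in the natural labelling; their vertices by the root-to-vertex paths
`brPaths`; their levels by `brLevels`.) -/
theorem left_increasing_characterization (t : LTree) (h : IsIncTree t) :
    (∃ s : PTree, Inc s = t) ↔
      (∀ i j : ℕ, i < j → j < (brPaths t).length →
        ¬ OnCommonPath ((brPaths t).getD i []) ((brPaths t).getD j []) →
        t.brLevels.getD i 0 < t.brLevels.getD j 0) := by
  rw [← offPathIncreasing_iff_getD]
  constructor
  · rintro ⟨s, rfl⟩
    exact offPathIncreasing_Inc s
  · intro hord
    refine ⟨Fgt t, ?_⟩
    simpa using addLevels_Inc_Fgt (c := 0) h.1 (by simpa using h.2) hord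
end
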